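/- arXiv:2202.04739 — 2 statements merged into one kernel-verified Lean document; each statement's English description precedes it below -/
import Mathlib

section
/- Let f(z) = c₁z + c₂z² + ⋯ be a formal power series over ℚ with c₁ ≠ 0 and let f^{-1}(z) = b₁z + b₂z² + ⋯ be its compositional inverse. Define Ψ_f : ℚ⟨Z⟩ → ℚ⟨Z⟩ linearly by Ψ_f(w) = ∑_{(i₁,…,i_l) ∈ 𝒞(n)} c_{i₁}⋯c_{i_l} (i₁,…,i_l)[w] for words w of length n. Then Ψ_f is invertible with inverse Ψ_{f^{-1}}. -/
/- STATEMENT 6: for f(z) = c₁z + c₂z² + ⋯ with c₁ ≠ 0 and compositional inverse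
f⁻¹(z) = b₁z + b₂z² + ⋯, the map Ψ_f (acting on words via compositions) is invertible
with inverse Ψ_{f⁻¹}. The compositional inverse condition is expressed coefficientwise:
the n-th coefficient of g∘f is ∑_{I ∈ 𝒞(n)} b_{l(I)} c_{i₁}⋯c_{i_l}, which must be δ_{n,1}. -/

/-- Noncommutative polynomials ℚ⟨Z⟩ on the alphabet Z = {z_m}, letters indexed by ℕ,
with the ◊ product z_m ◊ z_n = z_{m+n}. Words are lists of indices. -/
abbrev QW := List ℕ →₀ ℚ

/-- The list of all compositions of `n` (lists of positive integers summing to `n`). -/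
def comps : ℕ → List (List ℕ)
  | 0 => [[]]
  | n + 1 => (List.range (n + 1)).attach.flatMap fun k =>
      (comps k.1).map fun I => (n + 1 - k.1) :: I
  decreasing_by exact List.mem_range.mp k.2

/-- The action of a composition `I` on a word `w` of length `I.sum`: contract the
consecutive groups of letters of sizes `i₁, …, i_l` via `z_m ◊ z_n = z_{m+n}`. -/
def act : List ℕ → List ℕ → List ℕ
  | [], _ => []
  | i :: I, w => (w.take i).sum :: act I (w.drop i)

/-- Hoffman's map `Ψ_f` associated to the coefficient sequence `c` of `f`:
on a word `w` of length `n`, `Ψ_f(w) = ∑_{I ∈ 𝒞(n)} c_{i₁}⋯c_{i_l} I[w]`. -/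
noncomputable def Psi (c : ℕ → ℚ) (p : QW) : QW :=
  p.sum fun w r => r •
    ((comps w.length).map fun I =>
      ((I.map c).prod : ℚ) • (Finsupp.single (act I w) (1 : ℚ) : QW)).sum

namespace PsiAux

variable {α : Type*} {M : Type*} [AddCommMonoid M]

/-- Sum of `f` over `List.range n`. -/
def LS (n : ℕ) (f : ℕ → M) : M := ((List.range n).map f).sum

lemma LS_zero (f : ℕ → M) : LS 0 f = 0 := rfl

lemma LS_succ (n : ℕ) (f : ℕ → M) : LS (n + 1) f = LS n f + f n := by
  simp [LS, List.range_succ]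

lemma LS_congr {n : ℕ} {f g : ℕ → M} (h : ∀ i < n, f i = g i) : LS n f = LS n g := by
  unfold LS
  congr 1
  exact List.map_congr_left fun a ha => h a (List.mem_range.mp ha)

lemma LS_add (n : ℕ) (f g : ℕ → M) :
    LS n (fun i => f i + g i) = LS n f + LS n g := by
  induction n with
  | zero => simp [LS_zero]
  | succ n ih => simp only [LS_succ, ih]; abel

lemma LS_zero_fun (n : ℕ) : LS n (fun _ => (0 : M)) = 0 := by
  induction n with
  | zero => rfl
  | succ n ih => simp [LS_succ, ih]

lemma sum_map_add (l : List α) (f g : α → M) :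
    (l.map fun x => f x + g x).sum = (l.map f).sum + (l.map g).sum := by
  induction l with
  | nil => simp
  | cons a l ih => simp [ih]; abel

/-- triangular sum swap -/
lemma tri (g : ℕ → ℕ → M) : ∀ n,
    LS n (fun k => LS (k + 1) (fun j => g j (k - j))) = LS n (fun a => LS (n - a) (g a)) := by
  intro n
  induction n with
  | zero => rfl
  | succ n ih =>
    rw [LS_succ, ih]
    have h1 : LS (n + 1) (fun a => LS (n + 1 - a) (g a))
        = LS n (fun a => LS (n + 1 - a) (g a)) + LS 1 (g n) := by
      have hn : n + 1 - n = 1 := by omega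
      rw [LS_succ, hn]
    have h2 : LS n (fun a => LS (n + 1 - a) (g a))
        = LS n (fun a => LS (n - a) (g a) + g a (n - a)) := by
      apply LS_congr
      intro a ha
      have : n + 1 - a = (n - a) + 1 := by omega
      rw [this, LS_succ]
    have h3 : LS (n + 1) (fun j => g j (n - j)) = LS n (fun j => g j (n - j)) + g n 0 := by
      rw [LS_succ, Nat.sub_self]
    rw [h1, h2, LS_add, h3]
    have : LS 1 (g n) = g n 0 := by rw [LS_succ, LS_zero, zero_add]
    rw [this]
    abel

lemma sum_flatMap (l : List α) (g : α → List M) :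
    (l.flatMap g).sum = (l.map fun a => (g a).sum).sum := by
  induction l with
  | nil => rfl
  | cons a l ih => simp [List.flatMap_cons, ih]

lemma comps_zero : comps 0 = [[]] := by rw [comps]

lemma comps_succ (n : ℕ) : comps (n + 1) =
    (List.range (n + 1)).attach.flatMap fun k =>
      (comps k.1).map fun I => (n + 1 - k.1) :: I := by
  rw [comps]

lemma sum_attach (l : List ℕ) (f : ℕ → M) :
    (l.attach.map fun x => f x.1).sum = (l.map f).sum := by
  have : (l.attach.map fun x => f x.1) = (l.attach.map Subtype.val).map f := by
    rw [List.map_map]; rfl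
  rw [this, List.attach_map_subtype_val]

/-- unfolding sums over `comps (n+1)` -/
lemma sum_comps_succ (n : ℕ) (f : List ℕ → M) :
    ((comps (n + 1)).map f).sum
      = LS (n + 1) (fun k => ((comps k).map fun I => f ((n + 1 - k) :: I)).sum) := by
  rw [comps_succ, List.map_flatMap, sum_flatMap,
    sum_attach (List.range (n + 1))
      (fun k => (List.map f (List.map (fun I => (n + 1 - k) :: I) (comps k))).sum)]
  unfold LS
  congr 1
  apply List.map_congr_left
  intro a _
  rw [List.map_map]
  rfl

lemma mem_comps_succ {n : ℕ} {I : List ℕ} (h : I ∈ comps (n + 1)) :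
    ∃ k, k < n + 1 ∧ ∃ I', I' ∈ comps k ∧ I = (n + 1 - k) :: I' := by
  rw [comps_succ, List.mem_flatMap] at h
  obtain ⟨k, _, hmem⟩ := h
  rw [List.mem_map] at hmem
  obtain ⟨I', hI', rfl⟩ := hmem
  exact ⟨k.1, List.mem_range.mp k.2, I', hI', rfl⟩

lemma comps_sum : ∀ n, ∀ I ∈ comps n, I.sum = n := by
  intro n
  induction n using Nat.strong_induction_on with
  | _ n ih =>
    match n with
    | 0 => intro I hI; rw [comps_zero] at hI; simp at hI; simp [hI]
    | n + 1 =>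
      intro I hI
      obtain ⟨k, hk, I', hI', rfl⟩ := mem_comps_succ hI
      have := ih k hk I' hI'
      simp [this]; omega

lemma act_length : ∀ (I w : List ℕ), (act I w).length = I.length := by
  intro I
  induction I with
  | nil => intro w; rfl
  | cons i I ih => intro w; simp [act, ih]

lemma take_act : ∀ (j : ℕ) (I w : List ℕ),
    ((act I w).take j).sum = (w.take ((I.take j).sum)).sum := by
  intro j
  induction j with
  | zero => intro I w; simp
  | succ j ih =>
    intro I w
    cases I with
    | nil => simp [act]
    | cons i I =>
      simp only [act, List.take_succ_cons, List.sum_cons, ih I (w.drop i)]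
      rw [List.take_add, List.sum_append]

lemma drop_act : ∀ (j : ℕ) (I w : List ℕ),
    (act I w).drop j = act (I.drop j) (w.drop ((I.take j).sum)) := by
  intro j
  induction j with
  | zero => intro I w; simp
  | succ j ih =>
    intro I w
    cases I with
    | nil => simp [act]
    | cons i I =>
      simp only [act, List.drop_succ_cons, List.take_succ_cons, List.sum_cons,
        ih I (w.drop i), List.drop_drop]

lemma act_act : ∀ (J I w : List ℕ), act J (act I w) = act (act J I) w := by
  intro J
  induction J with
  | nil => intro I w; rfl
  | cons j J ih =>
    intro I w
    show ((act I w).take j).sum :: act J ((act I w).drop j) = _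
    rw [take_act, drop_act, ih]
    rfl

lemma act_replicate : ∀ (w : List ℕ), act (List.replicate w.length 1) w = w := by
  intro w
  induction w with
  | nil => rfl
  | cons a w ih => simp [act, List.replicate_succ, ih]

lemma sum_map_smul (l : List α) (f : α → ℚ) (v : QW) :
    (l.map fun x => f x • v).sum = ((l.map f).sum) • v := by
  induction l with
  | nil => simp
  | cons a l ih => simp [ih, add_smul]

lemma mapDomain_list_sum (φ : List ℕ → List ℕ) (l : List α) (f : α → QW) :
    Finsupp.mapDomain φ (l.map f).sum = (l.map fun x => Finsupp.mapDomain φ (f x)).sum := by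
  induction l with
  | nil => simp
  | cons a l ih => simp [Finsupp.mapDomain_add, ih]

/-- The key double sum `F_{c,b}(n) = ∑_{I ∈ 𝒞(n)} ∑_{J ∈ 𝒞(ℓ(I))} c_I b_J [act J I]`. -/
noncomputable def Fc (c b : ℕ → ℚ) (n : ℕ) : QW :=
  ((comps n).map fun I => ((comps I.length).map fun J =>
     ((I.map c).prod * (J.map b).prod) • (Finsupp.single (act J I) (1 : ℚ) : QW)).sum).sum

lemma mapDomain_Fc (c b : ℕ → ℚ) (φ : List ℕ → List ℕ) (n : ℕ) :
    Finsupp.mapDomain φ (Fc c b n)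
      = ((comps n).map fun I => ((comps I.length).map fun J =>
          ((I.map c).prod * (J.map b).prod) • (Finsupp.single (φ (act J I)) (1 : ℚ) : QW)).sum).sum := by
  rw [Fc, mapDomain_list_sum]
  congr 1
  apply List.map_congr_left
  intro I _
  rw [mapDomain_list_sum]
  congr 1
  apply List.map_congr_left
  intro J _
  rw [Finsupp.mapDomain_smul, Finsupp.mapDomain_single]

/-- auxiliary summand for the splitting argument -/
noncomputable def psiA (c b : ℕ → ℚ) (B I' : List ℕ) : QW :=
  ((comps I'.length).map fun J =>
    (((B.map c).prod * (I'.map c).prod) * (b B.length * (J.map b).prod)) •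
      (Finsupp.single (B.sum :: act J I') (1 : ℚ) : QW)).sum

/-- the splitting lemma: summing over a composition `I` together with a split point
equals summing over the first block `B` and the rest `I'`. -/
lemma split : ∀ (n : ℕ) (ψ : List ℕ → List ℕ → M),
    ((comps n).map fun I =>
        LS I.length fun k => ψ (I.take (I.length - k)) (I.drop (I.length - k))).sum
      = LS n (fun k' => ((comps (n - k')).map fun B =>
          ((comps k').map fun I' => ψ B I').sum).sum) := by
  intro n
  induction n using Nat.strong_induction_on with
  | _ n ih =>
    intro ψ
    match n with
    | 0 => rw [comps_zero]; simp [LS]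
    | m + 1 =>
      set T : ℕ → ℕ → M := fun k' k₂ => ((comps k₂).map fun B' =>
        ((comps k').map fun I' => ψ ((m + 1 - k' - k₂) :: B') I').sum).sum with hT
      rw [sum_comps_succ]
      have step1 : ∀ k₁ < m + 1,
          ((comps k₁).map fun I'' =>
            LS ((m + 1 - k₁) :: I'').length fun k =>
              ψ (((m + 1 - k₁) :: I'').take (((m + 1 - k₁) :: I'').length - k))
                (((m + 1 - k₁) :: I'').drop (((m + 1 - k₁) :: I'').length - k))).sum
          = LS (k₁ + 1) (fun k' => T k' (k₁ - k')) := by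
        intro k₁ hk₁
        have inner : ∀ I'' : List ℕ,
            (LS ((m + 1 - k₁) :: I'').length fun k =>
              ψ (((m + 1 - k₁) :: I'').take (((m + 1 - k₁) :: I'').length - k))
                (((m + 1 - k₁) :: I'').drop (((m + 1 - k₁) :: I'').length - k)))
            = (LS I''.length fun k =>
                ψ ((m + 1 - k₁) :: (I''.take (I''.length - k))) (I''.drop (I''.length - k)))
              + ψ [m + 1 - k₁] I'' := by
          intro I''
          rw [show ((m + 1 - k₁) :: I'').length = I''.length + 1 from rfl, LS_succ]
          congr 1
          · apply LS_congr
            intro k hk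
            have h1 : I''.length + 1 - k = (I''.length - k) + 1 := by omega
            rw [h1, List.take_succ_cons, List.drop_succ_cons]
          · have h2 : I''.length + 1 - I''.length = 1 := by omega
            rw [h2, List.take_succ_cons, List.drop_succ_cons]
            simp
        calc ((comps k₁).map fun I'' =>
              LS ((m + 1 - k₁) :: I'').length fun k =>
                ψ (((m + 1 - k₁) :: I'').take (((m + 1 - k₁) :: I'').length - k))
                  (((m + 1 - k₁) :: I'').drop (((m + 1 - k₁) :: I'').length - k))).sum
            = ((comps k₁).map fun I'' =>
                (LS I''.length fun k =>
                  ψ ((m + 1 - k₁) :: (I''.take (I''.length - k))) (I''.drop (I''.length - k)))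
                + ψ [m + 1 - k₁] I'').sum := by
              congr 1; exact List.map_congr_left fun I'' _ => inner I''
          _ = ((comps k₁).map fun I'' =>
                LS I''.length fun k =>
                  ψ ((m + 1 - k₁) :: (I''.take (I''.length - k))) (I''.drop (I''.length - k))).sum
              + ((comps k₁).map fun I'' => ψ [m + 1 - k₁] I'').sum := sum_map_add _ _ _
          _ = LS k₁ (fun k' => ((comps (k₁ - k')).map fun B' =>
                ((comps k').map fun I' => ψ ((m + 1 - k₁) :: B') I').sum).sum)
              + ((comps k₁).map fun I'' => ψ [m + 1 - k₁] I'').sum := by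
              rw [ih k₁ hk₁ (fun B I' => ψ ((m + 1 - k₁) :: B) I')]

          _ = LS k₁ (fun k' => T k' (k₁ - k')) + T k₁ 0 := by
              congr 1
              · apply LS_congr
                intro k' hk'
                have : m + 1 - k' - (k₁ - k') = m + 1 - k₁ := by omega
                simp only [hT, this]
              · simp only [hT, comps_zero]
                simp
          _ = LS (k₁ + 1) (fun k' => T k' (k₁ - k')) := by
              rw [LS_succ, Nat.sub_self]
      calc LS (m + 1) (fun k₁ => ((comps k₁).map fun I'' =>
              LS ((m + 1 - k₁) :: I'').length fun k =>
                ψ (((m + 1 - k₁) :: I'').take (((m + 1 - k₁) :: I'').length - k))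
                  (((m + 1 - k₁) :: I'').drop (((m + 1 - k₁) :: I'').length - k))).sum)
          = LS (m + 1) (fun k₁ => LS (k₁ + 1) (fun k' => T k' (k₁ - k'))) :=
            LS_congr step1
        _ = LS (m + 1) (fun k' => LS (m + 1 - k') (T k')) := tri T (m + 1)
        _ = LS (m + 1) (fun k' => ((comps (m + 1 - k')).map fun B =>
              ((comps k').map fun I' => ψ B I').sum).sum) := by
            apply LS_congr
            intro k' hk'
            have h : m + 1 - k' = (m - k') + 1 := by omega
            rw [h, sum_comps_succ]
            apply LS_congr
            intro k₂ _
            have : m - k' + 1 - k₂ = m + 1 - k' - k₂ := by omega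
            simp only [hT, this]

theorem Fc_eq (c b : ℕ → ℚ)
    (hbc : ∀ n, ((comps n).map fun I => b I.length * (I.map c).prod).sum =
      if n = 1 then 1 else 0) :
    ∀ n, Fc c b n = Finsupp.single (List.replicate n 1) (1 : ℚ) := by
  intro n
  induction n using Nat.strong_induction_on with
  | _ n ih =>
    match n with
    | 0 =>
      rw [Fc, comps_zero]
      simp only [List.map_cons, List.map_nil, List.length_nil, comps_zero,
        List.sum_cons, List.sum_nil, List.prod_nil, one_mul, one_smul, add_zero]
      rfl
    | m + 1 =>
      have stepA : Fc c b (m + 1) = ((comps (m + 1)).map fun I =>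
          LS I.length fun k =>
            psiA c b (I.take (I.length - k)) (I.drop (I.length - k))).sum := by
        rw [Fc]
        congr 1
        apply List.map_congr_left
        intro I hI
        obtain ⟨k₀, hk₀, I₀, hI₀, rfl⟩ := mem_comps_succ hI
        have hlen : ((m + 1 - k₀) :: I₀).length = I₀.length + 1 := rfl
        rw [hlen, sum_comps_succ]
        apply LS_congr
        intro k hk
        have hdlen : (((m + 1 - k₀) :: I₀).drop (I₀.length + 1 - k)).length = k := by
          simp only [List.length_drop, hlen]; omega
        rw [psiA, hdlen]
        congr 1
        apply List.map_congr_left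
        intro J _
        have htake : (((m + 1 - k₀) :: I₀).take (I₀.length + 1 - k)).length
            = I₀.length + 1 - k := by
          simp only [List.length_take, hlen]; omega
        have hact : act ((I₀.length + 1 - k) :: J) ((m + 1 - k₀) :: I₀)
            = (((m + 1 - k₀) :: I₀).take (I₀.length + 1 - k)).sum ::
                act J (((m + 1 - k₀) :: I₀).drop (I₀.length + 1 - k)) := rfl
        have hprod : ((((m + 1 - k₀) :: I₀).take (I₀.length + 1 - k)).map c).prod *
            ((((m + 1 - k₀) :: I₀).drop (I₀.length + 1 - k)).map c).prod
            = (((m + 1 - k₀) :: I₀).map c).prod := by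
          rw [List.map_take, List.map_drop, List.prod_take_mul_prod_drop]
        rw [hact]
        congr 1
        rw [htake, hprod]
        simp only [List.map_cons, List.prod_cons]
      rw [stepA, split (m + 1) (psiA c b)]
      have stepC : ∀ k' < m + 1,
          ((comps (m + 1 - k')).map fun B =>
            ((comps k').map fun I' => psiA c b B I').sum).sum
          = (if m + 1 - k' = 1 then (1 : ℚ) else 0) •
              ((comps k').map fun I' => ((comps I'.length).map fun J =>
                ((I'.map c).prod * (J.map b).prod) •
                  (Finsupp.single ((m + 1 - k') :: act J I') (1 : ℚ) : QW)).sum).sum := by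
        intro k' _
        rw [← hbc (m + 1 - k'), ← sum_map_smul]
        congr 1
        apply List.map_congr_left
        intro B hB
        have hBsum : B.sum = m + 1 - k' := comps_sum _ B hB
        have : ∀ I' : List ℕ, psiA c b B I'
            = (b B.length * (B.map c).prod) •
              (((comps I'.length).map fun J =>
                ((I'.map c).prod * (J.map b).prod) •
                  (Finsupp.single ((m + 1 - k') :: act J I') (1 : ℚ) : QW)).sum) := by
          intro I'
          rw [psiA, List.smul_sum, List.map_map]
          congr 1
          apply List.map_congr_left
          intro J _
          simp only [Function.comp_apply, smul_smul, hBsum]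
          ring_nf
        calc ((comps k').map fun I' => psiA c b B I').sum
            = ((comps k').map fun I' => (b B.length * (B.map c).prod) •
                (((comps I'.length).map fun J =>
                  ((I'.map c).prod * (J.map b).prod) •
                    (Finsupp.single ((m + 1 - k') :: act J I') (1 : ℚ) : QW)).sum)).sum := by
              congr 1; exact List.map_congr_left fun I' _ => this I'
          _ = (b B.length * (B.map c).prod) • ((comps k').map fun I' =>
                (((comps I'.length).map fun J =>
                  ((I'.map c).prod * (J.map b).prod) •
                    (Finsupp.single ((m + 1 - k') :: act J I') (1 : ℚ) : QW)).sum)).sum := by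
              rw [List.smul_sum, List.map_map]; rfl
      have key : LS (m + 1) (fun k' => ((comps (m + 1 - k')).map fun B =>
            ((comps k').map fun I' => psiA c b B I').sum).sum)
          = Finsupp.single (List.replicate (m + 1) 1) (1 : ℚ) := by
        rw [LS_congr stepC, LS_succ]
        have hzero : LS m (fun k' => (if m + 1 - k' = 1 then (1 : ℚ) else 0) •
            ((comps k').map fun I' => ((comps I'.length).map fun J =>
              ((I'.map c).prod * (J.map b).prod) •
                (Finsupp.single ((m + 1 - k') :: act J I') (1 : ℚ) : QW)).sum).sum) = 0 := by
          rw [show (0 : QW) = LS m (fun _ => (0 : QW)) from (LS_zero_fun m).symm]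
          apply LS_congr
          intro k' hk'
          have : m + 1 - k' ≠ 1 := by omega
          rw [if_neg this, zero_smul]
        rw [hzero, zero_add]
        have h1 : m + 1 - m = 1 := by omega
        rw [h1, if_pos rfl, one_smul]
        have := mapDomain_Fc c b (fun K => (1 : ℕ) :: K) m
        rw [ih m (Nat.lt_succ_self m)] at this
        rw [Finsupp.mapDomain_single] at this
        rw [← this]
        rw [← List.replicate_succ]
      rw [key]

end PsiAux

open PsiAux

/-- the image of a single word under `Psi` -/
noncomputable def Gw (c : ℕ → ℚ) (w : List ℕ) : QW :=
  ((comps w.length).map fun I =>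
    ((I.map c).prod : ℚ) • (Finsupp.single (act I w) (1 : ℚ) : QW)).sum

noncomputable def PsiL (c : ℕ → ℚ) : QW →ₗ[ℚ] QW :=
  Finsupp.lsum ℚ fun w => LinearMap.toSpanSingleton ℚ QW (Gw c w)

lemma Psi_eq_PsiL (c : ℕ → ℚ) (p : QW) : Psi c p = PsiL c p := rfl

lemma PsiL_single (c : ℕ → ℚ) (w : List ℕ) (r : ℚ) :
    PsiL c (Finsupp.single w r) = r • Gw c w := by
  simp [PsiL]

lemma PsiL_G (c b : ℕ → ℚ)
    (hbc : ∀ n, ((comps n).map fun I => b I.length * (I.map c).prod).sum =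
      if n = 1 then 1 else 0) (w : List ℕ) :
    PsiL b (Gw c w) = Finsupp.single w 1 := by
  have expand : PsiL b (Gw c w)
      = ((comps w.length).map fun I => ((comps I.length).map fun J =>
          ((I.map c).prod * (J.map b).prod) •
            (Finsupp.single (act (act J I) w) (1 : ℚ) : QW)).sum).sum := by
    rw [Gw, map_list_sum (PsiL b) _, List.map_map]
    apply congrArg
    apply List.map_congr_left
    intro I _
    simp only [Function.comp_apply, map_smul, PsiL_single, one_smul]
    rw [Gw, act_length I w, List.smul_sum, List.map_map]
    apply congrArg
    apply List.map_congr_left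
    intro J _
    simp only [Function.comp_apply, smul_smul, act_act]
  rw [expand, ← mapDomain_Fc c b (fun K => act K w) w.length,
    Fc_eq c b hbc w.length, Finsupp.mapDomain_single, act_replicate]

theorem Psi_inverse (c b : ℕ → ℚ) (hc1 : c 1 ≠ 0)
    (hbc : ∀ n, ((comps n).map fun I => b I.length * (I.map c).prod).sum =
      if n = 1 then 1 else 0)
    (hcb : ∀ n, ((comps n).map fun I => c I.length * (I.map b).prod).sum =
      if n = 1 then 1 else 0) :
    ∀ p : QW, Psi b (Psi c p) = p ∧ Psi c (Psi b p) = p := by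
  have key : ∀ (c' b' : ℕ → ℚ),
      (∀ n, ((comps n).map fun I => b' I.length * (I.map c').prod).sum =
        if n = 1 then 1 else 0) →
      ∀ p : QW, PsiL b' (PsiL c' p) = p := by
    intro c' b' h p
    have hcomp : (PsiL b').comp (PsiL c') = LinearMap.id := by
      apply Finsupp.lhom_ext
      intro w r
      simp only [LinearMap.comp_apply, LinearMap.id_apply, PsiL_single, map_smul,
        PsiL_G c' b' h w]
      rw [Finsupp.smul_single, smul_eq_mul, mul_one]
    have := LinearMap.congr_fun hcomp p
    simpa using this
  intro p
  constructor
  · rw [Psi_eq_PsiL, Psi_eq_PsiL]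
    exact key c b hbc p
  · rw [Psi_eq_PsiL, Psi_eq_PsiL]
    exact key b c hcb p
end

section
/- Ψ_{tanh} is a coalgebra homomorphism for the deconcatenation coproduct: Δ_decon ∘ Ψ_{tanh} = (Ψ_{tanh} ⊗ Ψ_{tanh}) ∘ Δ_decon on ℚ⟨Z⟩. -/
/-- Deconcatenation coproduct of a word (tensors are modelled on pairs of words). -/
noncomputable def deconW (w : List ℕ) : (List ℕ × List ℕ) →₀ ℚ :=
  ∑ k ∈ Finset.range (w.length + 1), Finsupp.single (w.take k, w.drop k) 1

/-- Linear extension of the deconcatenation coproduct. -/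
noncomputable def decon (p : QW) : (List ℕ × List ℕ) →₀ ℚ :=
  p.sum fun w r => r • deconW w

/-- Elementary tensor of two polynomials. -/
noncomputable def tens (p q : QW) : (List ℕ × List ℕ) →₀ ℚ :=
  p.sum fun u r => q.sum fun v s => Finsupp.single (u, v) (r * s)

/-! ### Auxiliary lemmas -/

lemma act_length (I w : List ℕ) : (act I w).length = I.length := by
  induction I generalizing w with
  | nil => rfl
  | cons i I ih => simp [act, ih]

lemma act_append (J K w : List ℕ) : act (J ++ K) w = act J w ++ act K (w.drop J.sum) := by
  induction J generalizing w with
  | nil => simp [act]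
  | cons i J ih =>
      show (w.take i).sum :: act (J ++ K) (w.drop i) = _
      simp only [act, ih, List.drop_drop, List.sum_cons, List.cons_append]

lemma act_take_eq (J w : List ℕ) : act J (w.take J.sum) = act J w := by
  induction J generalizing w with
  | nil => rfl
  | cons i J ih =>
      simp only [act, List.sum_cons, List.take_take, List.drop_take]
      rw [Nat.min_eq_left (Nat.le_add_right _ _)]
      congr 1
      simpa using ih (w.drop i)

lemma sum_of_mem_comps : ∀ n, ∀ I ∈ comps n, I.sum = n := by
  intro n
  induction n using Nat.strong_induction_on with
  | _ n ih =>
      match n with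
      | 0 => intro I hI; simp [comps] at hI; simp [hI]
      | n + 1 =>
          intro I hI
          rw [comps] at hI
          simp only [List.mem_flatMap, List.mem_attach, true_and, List.mem_map,
            Subtype.exists] at hI
          obtain ⟨k, hk, J, hJ, rfl⟩ := hI
          have hk' : k < n + 1 := List.mem_range.mp hk
          have := ih k hk' J hJ
          simp [this]; omega

lemma take_act (I w : List ℕ) (k : ℕ) (h : k ≤ I.length) :
    (act I w).take k = act (I.take k) w := by
  conv_lhs => rw [← List.take_append_drop k I, act_append]
  rw [List.take_left']
  rw [act_length, List.length_take]; omega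

lemma drop_act (I w : List ℕ) (k : ℕ) (h : k ≤ I.length) :
    (act I w).drop k = act (I.drop k) (w.drop (I.take k).sum) := by
  conv_lhs => rw [← List.take_append_drop k I, act_append]
  rw [List.drop_left']
  rw [act_length, List.length_take]; omega

lemma list_sum_map_add {α M} [AddCommMonoid M] (l : List α) (f g : α → M) :
    (l.map fun a => f a + g a).sum = (l.map f).sum + (l.map g).sum := by
  induction l with
  | nil => simp
  | cons a l ih => simp [ih]; abel

lemma attach_map_sum {α M} [AddCommMonoid M] (l : List α) (f : {x // x ∈ l} → M)
    (f' : α → M) (h : ∀ x, f x = f' x.1) : (l.attach.map f).sum = (l.map f').sum := by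
  simp [h]

lemma comps_succ_sum {M : Type*} [AddCommMonoid M] (n : ℕ) (f : List ℕ → M) :
    ((comps (n + 1)).map f).sum
    = ∑ k ∈ Finset.range (n + 1), ((comps k).map fun I => f ((n + 1 - k) :: I)).sum := by
  rw [comps, List.map_flatMap, List.flatMap, List.sum_flatten, List.map_map]
  rw [attach_map_sum _ _ (fun k => ((comps k).map fun I => f ((n + 1 - k) :: I)).sum)]
  · rfl
  · intro x
    simp [List.map_map]; rfl

set_option linter.unnecessarySeqFocus false in
lemma reindex_sum {M : Type*} [AddCommMonoid M] (n : ℕ) (g : ℕ → ℕ → ℕ → M) :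
    ∑ k ∈ Finset.range (n + 1), ∑ k2 ∈ Finset.range (k + 1), g (n + 1 - k) k2 (k - k2)
    = ∑ m ∈ Finset.range (n + 1), ∑ k2 ∈ Finset.range (m + 1), g (m + 1 - k2) k2 (n - m) := by
  rw [Finset.sum_sigma', Finset.sum_sigma']
  apply Finset.sum_nbij' (i := fun x => ⟨n - x.1 + x.2, x.2⟩)
    (j := fun x => ⟨n - x.1 + x.2, x.2⟩)
  · intro a ha
    simp only [Finset.mem_sigma, Finset.mem_range] at *
    omega
  · intro a ha
    simp only [Finset.mem_sigma, Finset.mem_range] at *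
    omega
  · intro a ha
    simp only [Finset.mem_sigma, Finset.mem_range] at ha
    ext <;> simp <;> omega
  · intro a ha
    simp only [Finset.mem_sigma, Finset.mem_range] at ha
    ext <;> simp <;> omega
  · intro a ha
    simp only [Finset.mem_sigma, Finset.mem_range] at ha
    have h1 : n - a.1 + a.2 + 1 - a.2 = n + 1 - a.1 := by omega
    have h2 : n - (n - a.1 + a.2) = a.1 - a.2 := by omega
    simp only [h1, h2]

lemma comps_cut {M : Type*} [AddCommMonoid M] :
    ∀ (n : ℕ) (F : List ℕ → List ℕ → M),
    ((comps n).map fun I =>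
      ∑ k ∈ Finset.range (I.length + 1), F (I.take k) (I.drop k)).sum
    = ∑ k ∈ Finset.range (n + 1),
        ((comps k).map fun J => ((comps (n - k)).map fun K => F J K).sum).sum := by
  intro n
  induction n using Nat.strong_induction_on with
  | _ n ih =>
    match n with
    | 0 => intro F; simp [comps]
    | n + 1 =>
      intro F
      have hG : ∀ (j : ℕ) (I : List ℕ),
          ∑ k ∈ Finset.range ((j :: I).length + 1), F ((j :: I).take k) ((j :: I).drop k)
          = (∑ k ∈ Finset.range (I.length + 1), F (j :: I.take k) (I.drop k))
            + F [] (j :: I) := by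
        intro j I
        rw [List.length_cons, Finset.sum_range_succ']
        simp
      rw [comps_succ_sum]
      simp only [hG]
      simp only [list_sum_map_add, Finset.sum_add_distrib]
      have h1 : ∀ k ∈ Finset.range (n + 1),
          ((comps k).map fun I =>
            ∑ k'' ∈ Finset.range (I.length + 1), F ((n + 1 - k) :: I.take k'') (I.drop k'')).sum
          = ∑ k2 ∈ Finset.range (k + 1),
              ((comps k2).map fun J =>
                ((comps (k - k2)).map fun K => F ((n + 1 - k) :: J) K).sum).sum := by
        intro k hk
        exact ih k (Finset.mem_range.mp hk) (fun J K => F ((n + 1 - k) :: J) K)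
      rw [Finset.sum_congr rfl h1]
      conv_rhs => rw [Finset.sum_range_succ']
      congr 1
      · rw [Finset.sum_congr rfl (fun m _ => comps_succ_sum m
          (fun J => ((comps (n + 1 - (m + 1))).map fun K => F J K).sum))]
        have := reindex_sum n
          (fun j a b => ((comps a).map fun J => ((comps b).map fun K => F (j :: J) K).sum).sum)
        rw [this]
        apply Finset.sum_congr rfl
        intro m _
        apply Finset.sum_congr rfl
        intro k2 _
        have : n + 1 - (m + 1) = n - m := by omega
        rw [this]
      · rw [show comps 0 = [[]] by rw [comps]]
        simp only [List.map_cons, List.map_nil, List.sum_cons, List.sum_nil, add_zero,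
          Nat.sub_zero]
        rw [comps_succ_sum n (fun K => F [] K)]

/-! ### Linear-algebra packaging -/

noncomputable def PsiW (c : ℕ → ℚ) (w : List ℕ) : QW :=
  ((comps w.length).map fun I =>
    ((I.map c).prod : ℚ) • (Finsupp.single (act I w) (1 : ℚ) : QW)).sum

noncomputable def deconL : QW →ₗ[ℚ] ((List ℕ × List ℕ) →₀ ℚ) :=
  Finsupp.lsum ℚ fun w => LinearMap.toSpanSingleton ℚ _ (deconW w)

lemma decon_eq (p : QW) : decon p = deconL p := rfl

noncomputable def tensL : QW →ₗ[ℚ] QW →ₗ[ℚ] ((List ℕ × List ℕ) →₀ ℚ) :=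
  Finsupp.lsum ℚ fun u => LinearMap.toSpanSingleton ℚ _
    (Finsupp.lsum ℚ fun v =>
      LinearMap.toSpanSingleton ℚ ((List ℕ × List ℕ) →₀ ℚ) (Finsupp.single (u, v) (1 : ℚ)))

lemma tens_eq (p q : QW) : tens p q = tensL p q := by
  simp only [tens, tensL, Finsupp.lsum_apply, Finsupp.sum, LinearMap.toSpanSingleton_apply,
    LinearMap.coe_sum, Finset.sum_apply, LinearMap.smul_apply, Finset.smul_sum,
    Finsupp.smul_single, smul_eq_mul, mul_one]

lemma Psi_single (c : ℕ → ℚ) (w : List ℕ) : Psi c (Finsupp.single w 1) = PsiW c w := by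
  rw [Psi, Finsupp.sum_single_index, one_smul]
  · rfl
  · exact zero_smul _ _

lemma tensL_single (a b : List ℕ) :
    tensL (Finsupp.single a (1 : ℚ)) (Finsupp.single b (1 : ℚ))
      = Finsupp.single (a, b) (1 : ℚ) := by
  simp [tensL, Finsupp.lsum_single, LinearMap.toSpanSingleton_apply]

lemma tensL_list_sum {α β : Type*} (l1 : List α) (l2 : List β) (f : α → QW) (g : β → QW) :
    tensL ((l1.map f).sum) ((l2.map g).sum)
      = (l1.map fun a => (l2.map fun b => tensL (f a) (g b)).sum).sum := by
  rw [← LinearMap.flip_apply tensL, map_list_sum, List.map_map]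
  refine congrArg List.sum (List.map_congr_left ?_)
  intro a _
  simp only [Function.comp_apply, LinearMap.flip_apply]
  rw [map_list_sum, List.map_map]
  rfl

lemma tens_PsiW (c : ℕ → ℚ) (u v : List ℕ) :
    tens (PsiW c u) (PsiW c v)
      = ((comps u.length).map fun J => ((comps v.length).map fun K =>
          (((J.map c).prod * (K.map c).prod) : ℚ) •
            Finsupp.single (act J u, act K v) (1 : ℚ)).sum).sum := by
  rw [tens_eq, PsiW, PsiW, tensL_list_sum]
  refine congrArg List.sum (List.map_congr_left ?_)
  intro J _
  refine congrArg List.sum (List.map_congr_left ?_)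
  intro K _
  rw [map_smul, LinearMap.map_smul₂, tensL_single, smul_smul, mul_comm]

/-- The summand appearing on both sides of the cut identity. -/
noncomputable def Fcw (c : ℕ → ℚ) (w : List ℕ) (J K : List ℕ) : (List ℕ × List ℕ) →₀ ℚ :=
  (((J.map c).prod * (K.map c).prod) : ℚ) •
    Finsupp.single (act J (w.take J.sum), act K (w.drop J.sum)) (1 : ℚ)

lemma decon_PsiW (c : ℕ → ℚ) (w : List ℕ) :
    decon (PsiW c w) =
      ∑ k ∈ Finset.range (w.length + 1), tens (PsiW c (w.take k)) (PsiW c (w.drop k)) := by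
  have hsingle : ∀ v : List ℕ, deconL (Finsupp.single v (1 : ℚ)) = deconW v := by
    intro v
    simp [deconL, Finsupp.lsum_single, LinearMap.toSpanSingleton_apply]
  have h2 : ∀ I : List ℕ,
      deconL (((I.map c).prod : ℚ) • (Finsupp.single (act I w) (1 : ℚ) : QW))
        = ∑ k ∈ Finset.range (I.length + 1), Fcw c w (I.take k) (I.drop k) := by
    intro I
    rw [map_smul, hsingle, deconW, act_length, Finset.smul_sum]
    refine Finset.sum_congr rfl fun k hk => ?_
    have hk' : k ≤ I.length := Nat.lt_succ_iff.mp (Finset.mem_range.mp hk)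
    rw [take_act I w k hk', drop_act I w k hk', ← act_take_eq (I.take k) w, Fcw]
    congr 1
    conv_lhs => rw [← List.take_append_drop k I]
    rw [List.map_append, List.prod_append]
  calc decon (PsiW c w)
      = ((comps w.length).map fun I =>
          ∑ k ∈ Finset.range (I.length + 1), Fcw c w (I.take k) (I.drop k)).sum := by
        rw [decon_eq, PsiW, map_list_sum, List.map_map]
        exact congrArg List.sum (List.map_congr_left fun I _ => h2 I)
    _ = ∑ k ∈ Finset.range (w.length + 1),
          ((comps k).map fun J => ((comps (w.length - k)).map fun K => Fcw c w J K).sum).sum :=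
        comps_cut w.length (Fcw c w)
    _ = ∑ k ∈ Finset.range (w.length + 1), tens (PsiW c (w.take k)) (PsiW c (w.drop k)) := by
        refine Finset.sum_congr rfl fun k hk => ?_
        have hk' : k ≤ w.length := Nat.lt_succ_iff.mp (Finset.mem_range.mp hk)
        rw [tens_PsiW, List.length_take, Nat.min_eq_left hk', List.length_drop]
        refine congrArg List.sum (List.map_congr_left fun J hJ => ?_)
        refine congrArg List.sum (List.map_congr_left fun K hK => ?_)
        rw [Fcw, sum_of_mem_comps k J hJ]

noncomputable def tensPsiL (c : ℕ → ℚ) :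
    ((List ℕ × List ℕ) →₀ ℚ) →ₗ[ℚ] ((List ℕ × List ℕ) →₀ ℚ) :=
  Finsupp.lsum ℚ fun x =>
    LinearMap.toSpanSingleton ℚ _ (tens (PsiW c x.1) (PsiW c x.2))

theorem Psi_tanh_coalgebra_hom (c : ℕ → ℚ)
    (hc : ∀ j, (c j : ℝ) = iteratedDeriv j Real.tanh 0 / (Nat.factorial j)) :
    ∀ p : QW, decon (Psi c p) =
      (decon p).sum fun x r =>
        r • tens (Psi c (Finsupp.single x.1 1)) (Psi c (Finsupp.single x.2 1)) := by
  intro p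
  have hL : decon (Psi c p) = p.sum fun w r => r •
      ∑ k ∈ Finset.range (w.length + 1), tens (PsiW c (w.take k)) (PsiW c (w.drop k)) := by
    rw [show Psi c p = p.sum (fun w r => r • PsiW c w) from rfl, decon_eq, map_finsuppSum]
    refine Finsupp.sum_congr fun w _ => ?_
    rw [map_smul, ← decon_eq, decon_PsiW]
  have hR : ((decon p).sum fun x r =>
      r • tens (Psi c (Finsupp.single x.1 1)) (Psi c (Finsupp.single x.2 1)))
      = p.sum fun w r => r •
        ∑ k ∈ Finset.range (w.length + 1), tens (PsiW c (w.take k)) (PsiW c (w.drop k)) := by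
    simp only [Psi_single]
    have h0 : ((decon p).sum fun x r => r • tens (PsiW c x.1) (PsiW c x.2))
        = tensPsiL c (decon p) := rfl
    rw [h0, show decon p = p.sum (fun w r => r • deconW w) from rfl, map_finsuppSum]
    refine Finsupp.sum_congr fun w _ => ?_
    rw [map_smul]
    congr 1
    rw [deconW, map_sum]
    refine Finset.sum_congr rfl fun k _ => ?_
    simp [tensPsiL, Finsupp.lsum_single, LinearMap.toSpanSingleton_apply]
  rw [hL, hR]
end
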